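/- For reserves R_α, R_β > 0, invariant k = R_α·R_β, fee parameter φ ∈ (0,1], and external price m_p > 0 satisfying φ·m_p ≥ k/R_α² (equivalently φ·m_p·R_α² ≥ k), the function g(Δα) = m_p·Δα − (1/φ)(k/(R_α − Δα) − R_β) on [0, R_α) attains its maximum at Δα* = R_α − √(k/(φ·m_p)), and the corresponding USDT input is Δβ* = (1/φ)(√(φ·m_p·k) − R_β). -/

import Mathlib

/-! Substituting t = R_α − Δα, the objective is the constant m_p·R_α + R_β/φ minus
h(t) = m_p·t + (k/φ)/t, and by AM–GM h is minimised on t > 0 at t = √((k/φ)/m_p),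
where m_p·t = (k/φ)/t. The USDT input there is k/t − R_β over φ, and k/t = √(φ·m_p·k). -/

open Set

namespace Real

theorem mul_add_sq_div_le_mul_add_sq_div {a s t : ℝ} (ha : 0 ≤ a) (hs : 0 ≤ s) (ht : 0 < t) :
    a * s + a * s ^ 2 / s ≤ a * t + a * s ^ 2 / t := by
  rcases hs.eq_or_lt with rfl | hs
  · simpa using mul_nonneg ha ht.le
  · have h_gap : a * t + a * s ^ 2 / t - (a * s + a * s ^ 2 / s) = a * (t - s) ^ 2 / t := by
      field_simp; ring
    have : 0 ≤ a * (t - s) ^ 2 / t := by positivity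
    linarith

theorem isMinOn_mul_add_div_Ioi_sqrt {a b : ℝ} (ha : 0 < a) (hb : 0 ≤ b) :
    IsMinOn (fun t => a * t + b / t) (Ioi 0) (√(b / a)) := by
  intro t (ht : 0 < t)
  have hb_eq : b = a * √(b / a) ^ 2 := by
    rw [sq_sqrt (div_nonneg hb ha.le)]; field_simp
  have h := mul_add_sq_div_le_mul_add_sq_div ha.le (sqrt_nonneg (b / a)) ht
  rwa [← hb_eq] at h

theorem div_sqrt_div {a b : ℝ} (hb : 0 ≤ b) : b / √(b / a) = √(a * b) := by
  rcases le_or_gt a 0 with ha | ha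
  · rw [sqrt_eq_zero'.mpr (div_nonpos_of_nonneg_of_nonpos hb ha),
      sqrt_eq_zero'.mpr (mul_nonpos_of_nonpos_of_nonneg ha hb), div_zero]
  · rw [sqrt_div' b ha.le, div_div_eq_mul_div, mul_div_right_comm, div_sqrt, sqrt_mul ha.le,
      mul_comm]

end Real

theorem arbitrage_optimal_solution_general (Rα Rβ k φ m_p : ℝ)
    (hRα : 0 < Rα) (hRβ : 0 < Rβ) (hk : k = Rα * Rβ)
    (hφ0 : 0 < φ) (hmp : 0 < m_p) :
    IsMaxOn (fun Δα => m_p * Δα - (1 / φ) * (k / (Rα - Δα) - Rβ))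
      (Set.Ico 0 Rα) (Rα - Real.sqrt (k / (φ * m_p))) ∧
    (1 / φ) * (k / (Rα - (Rα - Real.sqrt (k / (φ * m_p)))) - Rβ)
      = (1 / φ) * (Real.sqrt (φ * m_p * k) - Rβ) := by
  have hk0 : 0 ≤ k := hk ▸ (mul_pos hRα hRβ).le
  have h_min := (Real.isMinOn_mul_add_div_Ioi_sqrt hmp (div_nonneg hk0 hφ0.le)).comp_mapsTo
    (g := fun Δα => Rα - Δα) (t := Ico 0 Rα) (b := Rα - √(k / (φ * m_p)))
    (fun x hx => sub_pos.mpr hx.2) (by rw [sub_sub_cancel, div_div])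
  refine ⟨?_, ?_⟩
  · have h_obj : (fun Δα => m_p * Δα - (1 / φ) * (k / (Rα - Δα) - Rβ)) =
        fun Δα => m_p * Rα + Rβ / φ - (m_p * (Rα - Δα) + k / φ / (Rα - Δα)) := by
      funext Δα; ring
    rw [h_obj]
    exact isMaxOn_const.sub h_min
  · rw [sub_sub_cancel, Real.div_sqrt_div hk0, mul_assoc]

/-- The arbitrageur's objective g(Δα) = m_p·Δα − (1/φ)(k/(R_α − Δα) − R_β)
on [0, R_α) attains its maximum at Δα* = R_α − √(k/(φ m_p)), and the corresponding
USDT input is Δβ* = (1/φ)(√(φ m_p k) − R_β). -/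
theorem arbitrage_optimal_solution (Rα Rβ k φ m_p : ℝ)
    (hRα : 0 < Rα) (hRβ : 0 < Rβ) (hk : k = Rα * Rβ)
    (hφ0 : 0 < φ) (hφ1 : φ ≤ 1) (hmp : 0 < m_p)
    (hcond : φ * m_p * Rα ^ 2 ≥ k) :
    IsMaxOn (fun Δα => m_p * Δα - (1 / φ) * (k / (Rα - Δα) - Rβ))
      (Set.Ico 0 Rα) (Rα - Real.sqrt (k / (φ * m_p))) ∧
    (1 / φ) * (k / (Rα - (Rα - Real.sqrt (k / (φ * m_p)))) - Rβ)
      = (1 / φ) * (Real.sqrt (φ * m_p * k) - Rβ) :=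
  arbitrage_optimal_solution_general Rα Rβ k φ m_p hRα hRβ hk hφ0 hmp
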